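/- The lcm-lattice of the connected cut-set ideal J of a connected graph G is isomorphic to the order dual of the connected partition lattice of G, via the map sending a connected partition π to the squarefree monomial y^{F(π)} supported on the edges joining distinct blocks of π. -/

import Mathlib

open SimpleGraph
open scoped Classical

variable {V : Type*} [Fintype V] [DecidableEq V]

/-- `π` is a connected partition of `G`: every block (equivalence class) of `π`
induces a connected subgraph. -/
def ConnPart (G : SimpleGraph V) (π : Setoid V) : Prop :=
  ∀ c ∈ π.classes, (G.induce c).Connected

/-- `F(π)`: the set of edges of `G` whose endpoints lie in distinct blocks of `π`. -/
def crossF (G : SimpleGraph V) (π : Setoid V) : Set (Sym2 V) :=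
  {e | e ∈ G.edgeSet ∧ ∃ u v, e = s(u, v) ∧ ¬ π.r u v}

/-- Auxiliary graph: edges of `G` lying inside a block of the common refinement of
`π` and `π'`. -/
def meetGraph (G : SimpleGraph V) (π π' : Setoid V) : SimpleGraph V where
  Adj u v := G.Adj u v ∧ π.r u v ∧ π'.r u v
  symm := ⟨fun u v h => ⟨h.1.symm, π.iseqv.symm h.2.1, π'.iseqv.symm h.2.2⟩⟩
  loopless := ⟨fun u h => G.loopless.irrefl u h.1⟩

/-- The common-connected-refinement of `π` and `π'`: its blocks are the connected
components of the subgraphs induced on the blocks of the common refinement. -/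
def connMeet (G : SimpleGraph V) (π π' : Setoid V) : Setoid V :=
  (meetGraph G π π').reachableSetoid

/-- `F(σ)` for `σ` a connected cut: a connected cut-set. -/
def IsCCS (G : SimpleGraph V) (c : Set (Sym2 V)) : Prop :=
  ∃ σ : Setoid V, ConnPart G σ ∧ σ.classes.ncard = 2 ∧ c = crossF G σ

/-- The lcm-lattice of the connected cut-set ideal, realized (via supports of
squarefree monomials) as the set of all unions of families of connected cut-sets,
ordered by inclusion. -/
def lcmLat (G : SimpleGraph V) : Set (Set (Sym2 V)) :=
  {S | ∃ 𝒞 : Set (Set (Sym2 V)), (∀ c ∈ 𝒞, IsCCS G c) ∧ S = ⋃₀ 𝒞}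

/-!
A connected partition `π` is recovered from `F(π)` as the partition into connected components
of `G - F(π)`, which gives the order characterization. More generally, if `S` is a union of
crossing sets `F(τ)`, then the components of `G - S` form a connected partition whose crossing
set is exactly `S`; this gives surjectivity. Finally `F(π)` is a union of connected cut-sets:
for an edge `uv` crossing `π`, let `A` be the block of `u` and `C` the component of `v` in
`G - A`. Then `C` is connected, and so is `Cᶜ`, being `A` together with components of `G - A`
that are each joined to `A`; the cut `(C, Cᶜ)` contains `uv`, and an edge leaving `C` must end
in `A`, hence crosses `π`.
-/

section

variable {V : Type*} {G H : SimpleGraph V} {π π' τ : Setoid V} {S : Set (Sym2 V)} {x y : V}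

lemma mk_mem_crossF : s(x, y) ∈ crossF G π ↔ G.Adj x y ∧ ¬ π.r x y := by
  refine ⟨?_, fun h => ⟨h.1, x, y, rfl, h.2⟩⟩
  rintro ⟨he, u, v, huv, hr⟩
  refine ⟨he, fun hxy => ?_⟩
  rcases Sym2.eq_iff.mp huv with ⟨rfl, rfl⟩ | ⟨rfl, rfl⟩
  · exact hr hxy
  · exact hr (π.symm hxy)

lemma deleteEdges_crossF_adj : (G.deleteEdges (crossF G π)).Adj x y ↔ G.Adj x y ∧ π.r x y := by
  rw [deleteEdges_adj, mk_mem_crossF]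
  tauto

lemma crossF_subset_crossF_iff :
    crossF G τ ⊆ crossF G π ↔ ∀ x y, G.Adj x y → π.r x y → τ.r x y := by
  refine ⟨fun h x y hxy hπ => ?_, ?_⟩
  · by_contra hτ
    exact (mk_mem_crossF.mp (h (mk_mem_crossF.mpr ⟨hxy, hτ⟩))).2 hπ
  · rintro h e ⟨he, x, y, rfl, hτ⟩
    exact mk_mem_crossF.mpr ⟨he, fun hπ => hτ (h x y he hπ)⟩

lemma crossF_anti (h : π' ≤ π) : crossF G π ⊆ crossF G π' :=
  crossF_subset_crossF_iff.mpr fun _ _ _ hxy => h hxy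

lemma reachableSetoid_le_of_adj (h : ∀ x y, H.Adj x y → τ.r x y) : H.reachableSetoid ≤ τ := by
  rintro x y ⟨p⟩
  induction p with
  | nil => exact τ.refl _
  | cons hadj _ ih => exact τ.trans (h _ _ hadj) ih

lemma reachableSetoid_deleteEdges_crossF_le : (G.deleteEdges (crossF G π)).reachableSetoid ≤ π :=
  reachableSetoid_le_of_adj fun _ _ hxy => (deleteEdges_crossF_adj.mp hxy).2

lemma connPart_reachableSetoid (hle : H ≤ G) : ConnPart G H.reachableSetoid := by
  rintro c ⟨v, rfl⟩
  have hc : {x | H.reachableSetoid.r x v} = (H.connectedComponentMk v).supp := by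
    ext x
    exact ConnectedComponent.eq.symm
  rw [hc]
  exact (H.connectedComponentMk v).connected_toSimpleGraph.mono (G := H.induce _) fun _ _ h => hle h

lemma ConnPart.le_reachableSetoid_deleteEdges_crossF (hπ : ConnPart G π) :
    π ≤ (G.deleteEdges (crossF G π)).reachableSetoid := by
  intro x y hxy
  have hr := (hπ _ (π.mem_classes y)).preconnected ⟨x, hxy⟩ ⟨y, π.refl y⟩
  refine hr.map ⟨Subtype.val, fun {a b} hab => deleteEdges_crossF_adj.mpr ⟨hab, ?_⟩⟩
  exact π.trans a.2 (π.symm b.2)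

lemma ConnPart.le_of_crossF_subset (hπ' : ConnPart G π') (h : crossF G π ⊆ crossF G π') :
    π' ≤ π :=
  hπ'.le_reachableSetoid_deleteEdges_crossF.trans <| reachableSetoid_le_of_adj fun x y hxy =>
    let ⟨hadj, hπ'xy⟩ := deleteEdges_crossF_adj.mp hxy
    crossF_subset_crossF_iff.mp h x y hadj hπ'xy

lemma crossF_reachableSetoid_deleteEdges
    (hS : ∀ e ∈ S, ∃ τ : Setoid V, e ∈ crossF G τ ∧ crossF G τ ⊆ S) :
    crossF G (G.deleteEdges S).reachableSetoid = S := by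
  refine subset_antisymm ?_ fun e he => ?_
  · rintro e ⟨he, x, y, rfl, hxy⟩
    by_contra hS
    exact hxy (Adj.reachable (deleteEdges_adj.mpr ⟨he, hS⟩))
  · obtain ⟨τ, heτ, hτS⟩ := hS e he
    refine crossF_anti (reachableSetoid_le_of_adj fun x y hxy => ?_) heτ
    by_contra hτ
    exact (deleteEdges_adj.mp hxy).2 (hτS (mk_mem_crossF.mpr ⟨(deleteEdges_adj.mp hxy).1, hτ⟩))

lemma SimpleGraph.Connected.induce_compl_of_closed (hG : G.Connected) {A C : Set V}
    (hA : (G.induce A).Connected) (hCA : Disjoint C A)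
    (hC : ∀ x y, G.Adj x y → x ∈ C → y ∉ A → y ∈ C) :
    (G.induce Cᶜ).Connected := by
  obtain ⟨⟨u, hu⟩⟩ := hA.nonempty
  have hAC : A ⊆ Cᶜ := fun a ha haC => Set.disjoint_left.mp hCA haC ha
  have hA_reach (a : V) (ha : a ∈ A) : (G.induce Cᶜ).Reachable ⟨a, hAC ha⟩ ⟨u, hAC hu⟩ :=
    (hA.preconnected ⟨a, ha⟩ ⟨u, hu⟩).map (G.induceHomOfLE hAC).toHom
  -- walk from `x` towards `A`: until it first enters `A` it cannot meet `C`
  have h (x w : V) (p : G.Walk x w) (hw : w ∈ A) (hx : x ∈ Cᶜ) :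
      (G.induce Cᶜ).Reachable ⟨x, hx⟩ ⟨u, hAC hu⟩ := by
    induction p with
    | nil => exact hA_reach _ hw
    | @cons x y _ hxy p ih =>
      by_cases hxA : x ∈ A
      · exact hA_reach x hxA
      · have hy : y ∈ Cᶜ := fun hy => hx (hC _ _ hxy.symm hy hxA)
        exact (Adj.reachable (G := G.induce Cᶜ) (u := ⟨x, hx⟩) (v := ⟨y, hy⟩) hxy).trans
          (ih hw hy)
  exact (connected_iff_exists_forall_reachable _).mpr
    ⟨_, fun ⟨x, hx⟩ => (h x u (hG.preconnected x u).some hu hx).symm⟩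

lemma Setoid.classes_ker_mem {C : Set V} (hC : C.Nonempty) (hC' : Cᶜ.Nonempty) :
    (Setoid.ker (· ∈ C)).classes = {C, Cᶜ} := by
  ext s
  constructor
  · rintro ⟨y, rfl⟩
    by_cases hy : y ∈ C
    · left; ext x; simp [Setoid.ker_def, hy]
    · right; ext x; simp [Setoid.ker_def, hy]
  · rintro (rfl | rfl)
    · obtain ⟨v, hv⟩ := hC
      exact ⟨v, by ext x; simp [Setoid.ker_def, hv]⟩
    · obtain ⟨v, hv⟩ := hC'
      exact ⟨v, by ext x; simp_all [Setoid.ker_def]⟩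

lemma isCCS_crossF_ker_mem {C : Set V} (hC : (G.induce C).Connected)
    (hC' : (G.induce Cᶜ).Connected) : IsCCS G (crossF G (Setoid.ker (· ∈ C))) := by
  have hclasses := Setoid.classes_ker_mem (Set.nonempty_coe_sort.mp hC.nonempty)
    (Set.nonempty_coe_sort.mp hC'.nonempty)
  refine ⟨_, ?_, ?_, rfl⟩
  · rw [ConnPart, hclasses]
    rintro c (rfl | rfl)
    exacts [hC, hC']
  · rw [hclasses]
    have : Nonempty V := hC.nonempty.map Subtype.val
    exact Set.ncard_pair ne_compl_self

lemma exists_isCCS_mem_subset_crossF (hG : G.Connected) (hπ : ConnPart G π) {e : Sym2 V}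
    (he : e ∈ crossF G π) : ∃ c, IsCCS G c ∧ e ∈ c ∧ c ⊆ crossF G π := by
  obtain ⟨huvE, u, v, rfl, huv⟩ := he
  set A := {x | π.r x u}
  -- `K` is `G` without the edges between `A` and `Aᶜ`, so `C` is the component of `v` in `G - A`
  set K := G.deleteEdges (crossF G (Setoid.ker (· ∈ A)))
  set C := {x | K.Reachable x v}
  have hvA : v ∉ A := fun h => huv (π.symm h)
  have hCA : Disjoint C A := Set.disjoint_left.mpr fun x hx hxA =>
    hvA (Setoid.ker_def.mp (reachableSetoid_deleteEdges_crossF_le hx) ▸ hxA)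
  have hC (x y : V) (hxy : G.Adj x y) (hx : x ∈ C) (hy : y ∉ A) : y ∈ C := by
    have hxA : x ∉ A := Set.disjoint_left.mp hCA hx
    refine (Adj.reachable (deleteEdges_crossF_adj.mpr ⟨hxy.symm, ?_⟩)).trans hx
    exact Setoid.ker_def.mpr (propext (iff_of_false hy hxA))
  have hCconn : (G.induce C).Connected :=
    connPart_reachableSetoid (deleteEdges_le _) C (K.reachableSetoid.mem_classes v)
  refine ⟨_, isCCS_crossF_ker_mem hCconn
      (hG.induce_compl_of_closed (hπ A (π.mem_classes u)) hCA hC),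
    mk_mem_crossF.mpr ⟨huvE, fun h => ?_⟩, crossF_subset_crossF_iff.mpr fun x y hxy hπxy => ?_⟩
  · exact Set.disjoint_left.mp hCA (Setoid.ker_def.mp h ▸ Reachable.rfl) (π.refl u)
  · have h (a b : V) (hab : G.Adj a b) (hπab : π.r a b) (ha : a ∈ C) : b ∈ C :=
      hC a b hab ha fun hbA => Set.disjoint_left.mp hCA ha (π.trans hπab hbA)
    exact Setoid.ker_def.mpr (propext ⟨h x y hxy hπxy, h y x hxy.symm (π.symm hπxy)⟩)

lemma crossF_mem_lcmLat (hG : G.Connected) (hπ : ConnPart G π) : crossF G π ∈ lcmLat G := by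
  refine ⟨{c | IsCCS G c ∧ c ⊆ crossF G π}, fun c hc => hc.1, ?_⟩
  refine subset_antisymm (fun e he => ?_) (Set.sUnion_subset fun c hc => hc.2)
  obtain ⟨c, hc, hec, hcπ⟩ := exists_isCCS_mem_subset_crossF hG hπ he
  exact ⟨c, ⟨hc, hcπ⟩, hec⟩

lemma exists_connPart_crossF_eq_of_mem_lcmLat (hS : S ∈ lcmLat G) :
    ∃ π, ConnPart G π ∧ crossF G π = S := by
  obtain ⟨𝒞, h𝒞, rfl⟩ := hS
  refine ⟨_, connPart_reachableSetoid (deleteEdges_le _), crossF_reachableSetoid_deleteEdges ?_⟩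
  rintro e ⟨c, hc, hec⟩
  obtain ⟨τ, -, -, rfl⟩ := h𝒞 c hc
  exact ⟨τ, hec, Set.subset_sUnion_of_mem hc⟩

end

/-- The map `π ↦ F(π)` is an order isomorphism from the dual connected partition
lattice (connected partitions ordered by reverse refinement) onto the lcm-lattice
of the connected cut-set ideal (ordered by divisibility, i.e. inclusion of
supports): it lands in the lcm-lattice, is surjective onto it, and
`π' ≤ π` in refinement order iff `F(π) ⊆ F(π')`. -/
theorem stmt_10 (G : SimpleGraph V) (hG : G.Connected) :
    (∀ π : Setoid V, ConnPart G π → crossF G π ∈ lcmLat G) ∧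
    (∀ S ∈ lcmLat G, ∃ π : Setoid V, ConnPart G π ∧ crossF G π = S) ∧
    (∀ π π' : Setoid V, ConnPart G π → ConnPart G π' →
      (π' ≤ π ↔ crossF G π ⊆ crossF G π')) :=
  ⟨fun _ hπ => crossF_mem_lcmLat hG hπ, fun _ hS => exists_connPart_crossF_eq_of_mem_lcmLat hS,
    fun _ _ _ hπ' => ⟨crossF_anti, hπ'.le_of_crossF_subset⟩⟩
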